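/- arXiv:2512.14390 — 6 statements merged into one kernel-verified Lean document; each statement's English description precedes it below -/
import Mathlib

section
/- If h : V(G) → V(H) is a surjective two-way homomorphism and ψ is a k-b-coloring of G such that ker(h) ⊆ ker(ψ) (i.e., h(u) = h(v) implies ψ(u) = ψ(v)), then there is a k-b-coloring χ of H such that ψ = χ ∘ h. -/
/-!
A surjective two-way homomorphism identifies `H` with the quotient of `G` by `ker h`, so a
coloring constant on the fibres of `h` descends to `H`. Properness descends because adjacency
in `H` is reflected to any choice of preimages, and b-vertices descend because a homomorphism
maps closed neighbourhoods into closed neighbourhoods.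
-/

/-- The closed neighborhood of a vertex. -/
def closedNbhd {V : Type*} (G : SimpleGraph V) (v : V) : Set V :=
  insert v (G.neighborSet v)

/-- `u` is a b-vertex in the coloring `ψ` with colors `[k] = {1,…,k}`:
its closed neighborhood contains all `k` colors. -/
def IsBVertex {V : Type*} (G : SimpleGraph V) (k : ℕ) (ψ : V → ℕ) (u : V) : Prop :=
  ∀ c ∈ Finset.Icc 1 k, ∃ w ∈ closedNbhd G u, ψ w = c

/-- `ψ` is a proper `k`-coloring such that every color class contains a b-vertex. -/
def IsBColoring {V : Type*} (G : SimpleGraph V) (k : ℕ) (ψ : V → ℕ) : Prop :=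
  (∀ v, ψ v ∈ Finset.Icc 1 k) ∧
  (∀ u v, G.Adj u v → ψ u ≠ ψ v) ∧
  ∀ c ∈ Finset.Icc 1 k, ∃ u, ψ u = c ∧ IsBVertex G k ψ u

section

variable {V W : Type*} {G : SimpleGraph V} {H : SimpleGraph W}

theorem SimpleGraph.Hom.mapsTo_closedNbhd (f : G →g H) (u : V) :
    Set.MapsTo f (closedNbhd G u) (closedNbhd H (f u)) := by
  rintro w (rfl | hw)
  · exact Set.mem_insert _ _
  · exact Set.mem_insert_of_mem _ (f.map_adj hw)

theorem IsBVertex.of_comp_hom (f : G →g H) {k : ℕ} {χ : W → ℕ} {u : V}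
    (hu : IsBVertex G k (χ ∘ f) u) : IsBVertex H k χ (f u) := fun c hc =>
  let ⟨w, hw, hwc⟩ := hu c hc
  ⟨f w, f.mapsTo_closedNbhd u hw, hwc⟩

theorem IsBColoring.of_comp_surjective_twoWay (h : V → W) (hsurj : Function.Surjective h)
    (htwoway : ∀ u v : V, G.Adj u v ↔ H.Adj (h u) (h v)) {k : ℕ} {χ : W → ℕ}
    (hχ : IsBColoring G k (χ ∘ h)) : IsBColoring H k χ := by
  obtain ⟨hrange, hproper, hbvertex⟩ := hχ
  let f : G →g H := ⟨h, (htwoway _ _).mp⟩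
  refine ⟨hsurj.forall.mpr hrange, hsurj.forall₂.mpr fun u v huv => ?_, fun c hc => ?_⟩
  · exact hproper u v ((htwoway u v).mpr huv)
  · obtain ⟨u, huc, hu⟩ := hbvertex c hc
    exact ⟨h u, huc, hu.of_comp_hom f⟩

end

theorem stmt1 {V W : Type*} (G : SimpleGraph V) (H : SimpleGraph W)
    (h : V → W) (hsurj : Function.Surjective h)
    (htwoway : ∀ u v : V, G.Adj u v ↔ H.Adj (h u) (h v))
    (k : ℕ) (ψ : V → ℕ) (hψ : IsBColoring G k ψ)
    (hker : ∀ u v : V, h u = h v → ψ u = ψ v) :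
    ∃ χ : W → ℕ, IsBColoring H k χ ∧ ψ = χ ∘ h := by
  have hfactor : ψ = Function.extend h ψ 0 ∘ h :=
    (Function.FactorsThrough.extend_comp (0 : W → ℕ) fun u v => hker u v).symm
  refine ⟨Function.extend h ψ 0, ?_, hfactor⟩
  rw [hfactor] at hψ
  exact hψ.of_comp_surjective_twoWay h hsurj htwoway
end

section
/- Let G be a connected graph with feedback edge number p containing no dangling trees (no induced subtree that becomes a connected component after removing at most one edge). Then there exists a set S ⊆ V(G) with |S| ≤ 4p such that the set 𝒫 of connected components of G − S satisfies |𝒫| ≤ 4p and every P ∈ 𝒫 is a path all of whose vertices have degree exactly 2 in G. -/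
/-- The graph `G - S`: the subgraph of `G` on the vertices outside `S`
(vertices of `S` become isolated). -/
def restrictOut {V : Type*} (G : SimpleGraph V) (S : Set V) : SimpleGraph V where
  Adj u v := G.Adj u v ∧ u ∉ S ∧ v ∉ S
  symm := by
    constructor
    intro u v h
    exact ⟨h.1.symm, h.2.2, h.2.1⟩
  loopless := by
    constructor
    intro u h
    exact (G.ne_of_adj h.1) rfl

/-- `p` is the feedback edge number of `G`: the least size of a set of edges
whose removal makes `G` acyclic. -/
def FeedbackEdgeNumber {V : Type*} (G : SimpleGraph V) (p : ℕ) : Prop :=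
  IsLeast {n : ℕ | ∃ F : Set (Sym2 V), F.Finite ∧ F.ncard = n ∧
    (G.deleteEdges F).IsAcyclic} p

/-- `G` contains a dangling tree: a nonempty vertex set inducing a tree that becomes
a connected component after removing at most one edge from `G`. -/
def HasDanglingTree {V : Type*} (G : SimpleGraph V) : Prop :=
  ∃ A : Set V, A.Nonempty ∧ (G.induce A).Connected ∧ (G.induce A).IsAcyclic ∧
    ∃ F : Set (Sym2 V), F.ncard ≤ 1 ∧
      ∃ v ∈ A, A = {w | (G.deleteEdges F).Reachable v w}


/-!
Without dangling trees every vertex has degree at least 2 (a vertex of degree at most 1 is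
itself a dangling tree). Fix at most `p` edges `F` whose removal leaves a forest; a forest has
fewer edges than vertices, so the excess `∑ v, (deg v - 2)` is at most `2 p`. Let `S` consist of
the vertices of degree other than 2 and the endpoints of `F`: at most `2 p` of each.
A component of `G - S` avoids `F`, so it is a tree all of whose vertices have degree 2 in `G`;
hence exactly two edges leave it, all ending in `S`. A vertex `w ∈ S` receives at most `deg w`
of these edges, and at most `deg w - 1` if it is an endpoint of `F` (its partner across `F` lies
in `S`); either way at most `3 (deg w - 2)`, plus one for an endpoint of `F`. So twice the number
of components is at most `6 p + 2 p`.
-/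

open Finset

namespace SimpleGraph

variable {V : Type*} {G : SimpleGraph V}

lemma reachable_iff_eq_of_notMem_support {v w : V} (hv : v ∉ G.support) :
    G.Reachable v w ↔ v = w :=
  ⟨fun h => by_contra fun hne => hv (mem_support_of_reachable hne h), fun h => h ▸ .rfl⟩

lemma setOf_reachable_eq_iff {u v : V} :
    {w | G.Reachable u w} = {w | G.Reachable v w} ↔ G.Reachable u v :=
  ⟨fun h => (h ▸ Reachable.rfl : v ∈ {w | G.Reachable u w}),
    fun h => Set.ext fun _ => ⟨h.symm.trans, h.trans⟩⟩

lemma connected_induce_setOf_reachable {H : SimpleGraph V} (hHG : H ≤ G) (v : V) :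
    (G.induce {w | H.Reachable v w}).Connected := by
  have : {w | H.Reachable v w} = (H.connectedComponentMk v).supp := by
    ext w
    simp [reachable_comm]
  rw [this]
  exact (H.connectedComponentMk v).maximal_connected_induce_supp.1.mono fun _ _ h => hHG h

lemma two_le_degree_of_not_hasDanglingTree [Fintype V] [DecidableRel G.Adj]
    (hG : ¬HasDanglingTree G) (v : V) : 2 ≤ G.degree v := by
  classical
  by_contra! hv
  have hv' : v ∉ (G.deleteIncidenceSet v).support := fun h =>
    (G.support_deleteIncidenceSet_subset v h).2 rfl
  have htree : (G.induce {v}).IsTree := .of_subsingleton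
  refine hG ⟨{v}, Set.singleton_nonempty v, htree.connected, htree.isAcyclic,
    G.incidenceSet v, ?_, v, rfl, ?_⟩
  · rw [← Nat.card_coe_set_eq, Nat.card_eq_fintype_card, card_incidenceSet_eq_degree]
    omega
  · ext w
    exact (reachable_iff_eq_of_notMem_support hv').trans eq_comm |>.symm

lemma IsAcyclic.card_edgeFinset_lt [Fintype V] [Nonempty V] [Fintype G.edgeSet]
    (hG : G.IsAcyclic) : #G.edgeFinset < Fintype.card V := by
  classical
  obtain ⟨T, hGT, -, hT⟩ := connected_top.exists_isTree_le_of_le_of_isAcyclic le_top hG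
  calc #G.edgeFinset ≤ #T.edgeFinset := card_le_card (edgeFinset_mono hGT)
    _ < Fintype.card V := by rw [← hT.card_edgeFinset]; omega

lemma card_edgeFinset_le_card_add_card_of_isAcyclic_deleteEdges [Fintype V] [DecidableEq V]
    [DecidableRel G.Adj] {F : Finset (Sym2 V)} (hF : (G.deleteEdges F).IsAcyclic) :
    #G.edgeFinset ≤ Fintype.card V + #F := by
  cases isEmpty_or_nonempty V
  · simp [Finset.eq_empty_of_isEmpty G.edgeFinset]
  · have := hF.card_edgeFinset_lt
    rw [edgeFinset_deleteEdges] at this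
    have := le_card_sdiff F G.edgeFinset
    omega

lemma IsAcyclic.induce_of_forall_notMem {F : Set (Sym2 V)} (hF : (G.deleteEdges F).IsAcyclic)
    {P : Set V} (hP : ∀ e ∈ F, ∀ u ∈ e, u ∉ P) : (G.induce P).IsAcyclic := by
  refine IsAcyclic.anti (fun a b hab => ?_) (hF.induce P)
  simp only [comap_adj, Function.Embedding.subtype_apply, deleteEdges_adj] at hab ⊢
  exact ⟨hab, fun he => hP _ he a (Sym2.mem_mk_left _ _) a.2⟩

lemma exists_adj_of_mem_biUnion_toFinset [DecidableEq V] {F : Finset (Sym2 V)}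
    (hF : (F : Set (Sym2 V)) ⊆ G.edgeSet) {v : V} (hv : v ∈ F.biUnion Sym2.toFinset) :
    ∃ w ∈ F.biUnion Sym2.toFinset, G.Adj v w := by
  obtain ⟨e, he, hve⟩ := mem_biUnion.1 hv
  rw [Sym2.mem_toFinset] at hve
  obtain ⟨w, rfl⟩ := Sym2.mem_iff_exists.1 hve
  exact ⟨w, mem_biUnion.2 ⟨_, he, by simp⟩, hF he⟩

section Degrees

variable [Fintype V] [DecidableRel G.Adj]

lemma sum_degree_sub_two_add_two_mul_card_eq (hG : ∀ v, 2 ≤ G.degree v) :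
    ∑ v, (G.degree v - 2) + 2 * Fintype.card V = 2 * #G.edgeFinset := by
  rw [← sum_degrees_eq_twice_card_edges, ← Finset.card_univ, card_eq_sum_ones, mul_sum,
    ← sum_add_distrib]
  exact sum_congr rfl fun v _ => by have := hG v; omega

lemma card_filter_degree_ne_two_le (hG : ∀ v, 2 ≤ G.degree v) :
    #{v | G.degree v ≠ 2} ≤ ∑ v, (G.degree v - 2) := by
  rw [card_eq_sum_ones]
  calc ∑ v ∈ {v | G.degree v ≠ 2}, 1 ≤ ∑ v ∈ {v | G.degree v ≠ 2}, (G.degree v - 2) :=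
        sum_le_sum fun v hv => by have := hG v; simp only [mem_filter] at hv; omega
    _ ≤ ∑ v, (G.degree v - 2) := sum_le_univ_sum_of_nonneg fun _ => Nat.zero_le _

variable [DecidableEq V]

lemma card_neighborFinset_sdiff_lt_degree {S : Finset V} {v w : V} (h : G.Adj v w)
    (hw : w ∈ S) : #(G.neighborFinset v \ S) < G.degree v := by
  rw [← card_neighborFinset_eq_degree]
  refine card_lt_card (ssubset_iff_of_subset sdiff_subset |>.2 ⟨w, ?_, ?_⟩)
  · simpa using h
  · simp [hw]

lemma sum_card_neighborFinset_sdiff_le {E : Finset V} (hG : ∀ v, 2 ≤ G.degree v)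
    (hE : ∀ v ∈ E, ∃ w ∈ E, G.Adj v w) :
    ∑ v ∈ ({v | G.degree v ≠ 2} : Finset V) ∪ E,
      #(G.neighborFinset v \ (({v | G.degree v ≠ 2} : Finset V) ∪ E)) ≤
      3 * ∑ v, (G.degree v - 2) + #E := by
  set S : Finset V := ({v | G.degree v ≠ 2} : Finset V) ∪ E
  have hvertex : ∀ v ∈ S,
      #(G.neighborFinset v \ S) ≤ 3 * (G.degree v - 2) + if v ∈ E then 1 else 0 := by
    intro v hv
    have := hG v
    by_cases hvE : v ∈ E
    · obtain ⟨w, hwE, hvw⟩ := hE v hvE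
      have := card_neighborFinset_sdiff_lt_degree (S := S) hvw (mem_union_right _ hwE)
      simp only [hvE, if_true]
      omega
    · have hdeg : G.degree v ≠ 2 := by simpa [S, hvE] using hv
      have : #(G.neighborFinset v \ S) ≤ G.degree v :=
        (card_le_card sdiff_subset).trans_eq (card_neighborFinset_eq_degree G v)
      simp only [hvE, if_false]
      omega
  calc ∑ v ∈ S, #(G.neighborFinset v \ S)
      ≤ ∑ v ∈ S, (3 * (G.degree v - 2) + if v ∈ E then 1 else 0) := sum_le_sum hvertex
    _ = 3 * ∑ v ∈ S, (G.degree v - 2) + #{v ∈ S | v ∈ E} := by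
      rw [sum_add_distrib, mul_sum, sum_boole, Nat.cast_id]
    _ ≤ 3 * ∑ v, (G.degree v - 2) + #E := by
      refine add_le_add (Nat.mul_le_mul_left _ ?_) (card_le_card fun _ h => (mem_filter.1 h).2)
      exact sum_le_univ_sum_of_nonneg fun _ => Nat.zero_le _

lemma sum_degree_eq_two_mul_card_edgeFinset_induce_add (P : Finset V) :
    ∑ u ∈ P, G.degree u =
      2 * #(G.induce (P : Set V)).edgeFinset + ∑ u ∈ P, #(G.neighborFinset u \ P) := by
  have hinside :
      ∑ u ∈ P, #(G.neighborFinset u ∩ P) = 2 * #(G.induce (P : Set V)).edgeFinset := by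
    rw [← sum_degrees_eq_twice_card_edges, ← sum_coe_sort P]
    refine sum_congr rfl fun u _ => ?_
    have h := G.map_neighborFinset_induce (s := (P : Set V)) u
    rw [toFinset_coe] at h
    rw [← h, card_map]
    convert card_neighborFinset_eq_degree _ _
  simp_rw [← hinside, ← sum_add_distrib, card_inter_add_card_sdiff, card_neighborFinset_eq_degree]

lemma sum_card_neighborFinset_sdiff_eq_two {P : Finset V} (hP : (G.induce (P : Set V)).IsTree)
    (hdeg : ∀ u ∈ P, G.degree u = 2) : ∑ u ∈ P, #(G.neighborFinset u \ P) = 2 := by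
  have hsum := sum_degree_eq_two_mul_card_edgeFinset_induce_add (G := G) P
  have hedges := hP.card_edgeFinset
  rw [sum_congr rfl hdeg, sum_const, smul_eq_mul] at hsum
  simp only [coe_sort_coe, Fintype.card_coe] at hedges
  omega

end Degrees

end SimpleGraph

lemma Finset.card_biUnion_sym2_toFinset_le {V : Type*} [DecidableEq V] (F : Finset (Sym2 V)) :
    #(F.biUnion Sym2.toFinset) ≤ 2 * #F := by
  refine card_biUnion_le.trans ?_
  rw [mul_comm, ← smul_eq_mul, ← sum_const]
  exact sum_le_sum fun e _ => by rw [Sym2.card_toFinset]; split_ifs <;> omega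

lemma FeedbackEdgeNumber.exists_finset_subset_edgeSet {V : Type*} {G : SimpleGraph V} {p : ℕ}
    (h : FeedbackEdgeNumber G p) :
    ∃ F : Finset (Sym2 V), (F : Set (Sym2 V)) ⊆ G.edgeSet ∧ #F ≤ p ∧
      (G.deleteEdges F).IsAcyclic := by
  classical
  obtain ⟨F, hF, rfl, hFac⟩ := h.1
  refine ⟨{e ∈ hF.toFinset | e ∈ G.edgeSet}, fun e he => (mem_filter.1 he).2, ?_, ?_⟩
  · rw [Set.ncard_eq_toFinset_card F hF]
    exact card_filter_le _ _
  · convert hFac using 1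
    rw [SimpleGraph.deleteEdges_eq_inter_edgeSet F]
    congr 1
    ext
    simp

open SimpleGraph

section restrictOut

variable {V : Type*} {G : SimpleGraph V}

lemma restrictOut_le (S : Set V) : restrictOut G S ≤ G := fun _ _ h => h.1

lemma notMem_of_reachable_restrictOut {S : Set V} {v w : V} (hv : v ∉ S)
    (h : (restrictOut G S).Reachable v w) : w ∉ S := fun hw =>
  hv ((reachable_iff_eq_of_notMem_support (fun ⟨_, h'⟩ => h'.2.1 hw)).1 h.symm ▸ hw)

lemma two_mul_ncard_components_restrictOut_le [Fintype V] [DecidableEq V] [DecidableRel G.Adj]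
    (S : Finset V) (hdeg : ∀ v ∉ S, G.degree v = 2)
    (hacyc : ∀ v ∉ S, (G.induce {w | (restrictOut G S).Reachable v w}).IsAcyclic) :
    2 * {P : Set V | ∃ v ∉ (S : Set V), P = {w | (restrictOut G S).Reachable v w}}.ncard ≤
      ∑ w ∈ S, #(G.neighborFinset w \ S) := by
  classical
  set H := restrictOut G S
  set comp : V → Set V := fun v => {w | H.Reachable v w}
  have hcomps : {P : Set V | ∃ v ∉ (S : Set V), P = comp v} = ↑(Sᶜ.image comp) := by
    ext P
    simp [eq_comm]
  have hfiber : ∀ v ∉ S, ∑ u ∈ Sᶜ with comp u = comp v, #{w ∈ S | G.Adj u w} = 2 := by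
    intro v hv
    set P : Finset V := {u | H.Reachable v u}
    have hPcomp : (P : Set V) = comp v := by ext; simp [P, comp]
    have hPS : ∀ u ∈ P, u ∉ S := fun u hu =>
      notMem_of_reachable_restrictOut (S := (S : Set V)) hv (by simpa [P] using hu)
    have htree : (G.induce (P : Set V)).IsTree := by
      rw [hPcomp]
      exact ⟨connected_induce_setOf_reachable (restrictOut_le _) v, hacyc v hv⟩
    have hfib : {u ∈ Sᶜ | comp u = comp v} = P := by
      ext u
      simp only [mem_filter, mem_compl, comp, setOf_reachable_eq_iff, P, mem_univ, true_and]
      exact ⟨fun h => h.2.symm, fun h => ⟨hPS u (by simpa [P] using h), h.symm⟩⟩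
    rw [hfib, ← sum_card_neighborFinset_sdiff_eq_two htree fun u hu => hdeg u (hPS u hu)]
    refine sum_congr rfl fun u hu => congrArg card (ext fun w => ?_)
    simp only [mem_filter, mem_sdiff, mem_neighborFinset, P, mem_univ, true_and]
    constructor
    · rintro ⟨hw, huw⟩
      exact ⟨huw, fun hvw => hPS w (by simpa [P] using hvw) hw⟩
    · rintro ⟨huw, hvw⟩
      refine ⟨by_contra fun hw => ?_, huw⟩
      exact hvw ((by simpa [P] using hu : H.Reachable v u).trans
        (Adj.reachable ⟨huw, hPS u hu, hw⟩))
  have hdouble : ∑ u ∈ Sᶜ, #{w ∈ S | G.Adj u w} = ∑ w ∈ S, #(G.neighborFinset w \ S) := by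
    change ∑ u ∈ Sᶜ, #(S.bipartiteAbove G.Adj u) = _
    rw [sum_card_bipartiteAbove_eq_sum_card_bipartiteBelow]
    exact sum_congr rfl fun w _ => congrArg card (ext fun u => by simp [adj_comm, and_comm])
  rw [hcomps, Set.ncard_coe_finset, ← hdouble,
    ← sum_fiberwise_of_maps_to (g := comp) (t := Sᶜ.image comp) fun u hu => mem_image_of_mem _ hu,
    mul_comm, ← smul_eq_mul, ← sum_const]
  refine sum_le_sum fun P hP => ?_
  obtain ⟨v, hv, rfl⟩ := mem_image.1 hP
  rw [hfiber v (by simpa using hv)]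

end restrictOut

theorem stmt2_general {V : Type*} [Fintype V] (G : SimpleGraph V) (p : ℕ)
    (hfen : FeedbackEdgeNumber G p)
    (hdt : ¬HasDanglingTree G) :
    ∃ S : Set V, S.ncard ≤ 4 * p ∧
      {P : Set V | ∃ v ∉ S, P = {w | (restrictOut G S).Reachable v w}}.ncard ≤ 4 * p ∧
      ∀ P ∈ {P : Set V | ∃ v ∉ S, P = {w | (restrictOut G S).Reachable v w}},
        (G.induce P).Connected ∧ (G.induce P).IsAcyclic ∧
        ∀ v ∈ P, (G.neighborSet v).ncard = 2 := by
  classical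
  obtain ⟨F, hFG, hFp, hFac⟩ := hfen.exists_finset_subset_edgeSet
  have hdeg := G.two_le_degree_of_not_hasDanglingTree hdt
  have hexcess : ∑ v, (G.degree v - 2) ≤ 2 * p := by
    have := G.sum_degree_sub_two_add_two_mul_card_eq hdeg
    have := card_edgeFinset_le_card_add_card_of_isAcyclic_deleteEdges hFac
    omega
  set E := F.biUnion Sym2.toFinset
  have hE : #E ≤ 2 * p := (card_biUnion_sym2_toFinset_le F).trans (by omega)
  set S : Finset V := ({v | G.degree v ≠ 2} : Finset V) ∪ E
  have hS2 : ∀ v ∉ S, G.degree v = 2 := fun v hv => by simp_all [S]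
  have hacyc : ∀ v ∉ S, (G.induce {w | (restrictOut G S).Reachable v w}).IsAcyclic :=
    fun v hv => hFac.induce_of_forall_notMem fun e he u hu hreach =>
      notMem_of_reachable_restrictOut hv hreach
        (mem_union_right _ (mem_biUnion.2 ⟨e, he, Sym2.mem_toFinset.2 hu⟩))
  refine ⟨S, ?_, ?_, ?_⟩
  · have : #S ≤ _ := card_union_le _ _
    have := G.card_filter_degree_ne_two_le hdeg
    rw [Set.ncard_coe_finset]
    omega
  · have := two_mul_ncard_components_restrictOut_le S hS2 hacyc
    have : ∑ w ∈ S, #(G.neighborFinset w \ S) ≤ 3 * _ + #E :=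
      G.sum_card_neighborFinset_sdiff_le hdeg fun _ => exists_adj_of_mem_biUnion_toFinset hFG
    omega
  · rintro P ⟨v, hv, rfl⟩
    refine ⟨connected_induce_setOf_reachable (restrictOut_le _) v, hacyc v hv, fun w hw => ?_⟩
    rw [← Nat.card_coe_set_eq, Nat.card_eq_fintype_card, card_neighborSet_eq_degree]
    exact hS2 w (notMem_of_reachable_restrictOut hv hw)

theorem stmt2 {V : Type*} [Fintype V] (G : SimpleGraph V) (p : ℕ)
    (hconn : G.Connected) (hfen : FeedbackEdgeNumber G p)
    (hdt : ¬HasDanglingTree G) :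
    ∃ S : Set V, S.ncard ≤ 4 * p ∧
      {P : Set V | ∃ v ∉ S, P = {w | (restrictOut G S).Reachable v w}}.ncard ≤ 4 * p ∧
      ∀ P ∈ {P : Set V | ∃ v ∉ S, P = {w | (restrictOut G S).Reachable v w}},
        (G.induce P).Connected ∧ (G.induce P).IsAcyclic ∧
        ∀ v ∈ P, (G.neighborSet v).ncard = 2 :=
  stmt2_general G p hfen hdt
end

section
/- Let G be a graph, S a fen-core of G, and S⁺ ⊇ S a minimal set such that each connected component of G contains a vertex of S⁺. Then for each vertex u ∉ S, there are at most two distinct u-S⁺ paths (paths from u to S⁺ whose only vertex in S⁺ is the endpoint). -/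
/-- The (open) neighborhood of a set `S`: vertices adjacent to some vertex of `S`. -/
def nbhdSet {V : Type*} (G : SimpleGraph V) (S : Set V) : Set V :=
  {x | ∃ s ∈ S, G.Adj x s}

/-- A `u`-`S` path: a path from `u` ending in `S` that meets `S` only in its
final vertex. -/
def IsUSPath {V : Type*} (G : SimpleGraph V) (S : Set V) (u : V)
    (q : Σ s : V, G.Walk u s) : Prop :=
  q.1 ∈ S ∧ q.2.IsPath ∧ ∀ x ∈ q.2.support, x ∈ S → x = q.1

/-- An `S`-outer path: a path disjoint from `S` whose intersection with `N(S)`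
consists exactly of its two endpoints. -/
def IsOuterPath {V : Type*} (G : SimpleGraph V) (S : Set V) {a b : V}
    (P : G.Walk a b) : Prop :=
  P.IsPath ∧ (∀ x ∈ P.support, x ∉ S) ∧
  {x | x ∈ P.support ∧ x ∈ nbhdSet G S} = {a, b}

/-- `S` is a fen-core of `G` (with feedback edge number `p`): every cycle has an
edge inside `G[S]`, every vertex outside `S` has at most two `u`-`S` paths, every
`S`-outer path has length at least `7`, and `|S| ≤ 32 p`. -/
def IsFenCore {V : Type*} (G : SimpleGraph V) (S : Set V) (p : ℕ) : Prop :=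
  (∀ (v : V) (c : G.Walk v v), c.IsCycle → ∃ e ∈ c.edges, ∀ x ∈ e, x ∈ S) ∧
  (∀ u ∉ S, {q : Σ s : V, G.Walk u s | IsUSPath G S u q}.ncard ≤ 2) ∧
  (∀ (a b : V) (P : G.Walk a b), IsOuterPath G S P → 7 ≤ P.length) ∧
  S.ncard ≤ 32 * p

/-! By minimality, a vertex of `S⁺ \ S` is the only vertex of `S⁺` in its component, and that
component avoids `S`. Hence a component meeting `S` meets `S⁺` exactly in `S`, where the fen-core
bound applies, while a component avoiding `S` contains a single vertex of `S⁺` and, since every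
cycle has an edge in `G[S]`, is a tree: there is at most one path from `u` to that vertex. -/

namespace SimpleGraph

variable {V : Type*} {G : SimpleGraph V}

lemma eq_of_reachable_of_minimal_cover {S T : Set V}
    (hmin : Minimal (fun X : Set V => S ⊆ X ∧ ∀ v : V, ∃ w ∈ X, G.Reachable v w) T)
    {t w : V} (ht : t ∈ T) (htS : t ∉ S) (hw : w ∈ T) (htw : G.Reachable t w) : w = t := by
  have hS : S ⊆ T \ {t} := fun s hs => ⟨hmin.prop.1 hs, by rintro rfl; exact htS hs⟩
  obtain ⟨v, hv⟩ : ∃ v, ∀ w ∈ T \ {t}, ¬ G.Reachable v w := by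
    by_contra! hcover
    exact (hmin.2 ⟨hS, hcover⟩ Set.sdiff_subset ht).2 rfl
  obtain ⟨w₀, hw₀, hvw₀⟩ := hmin.prop.2 v
  obtain rfl : w₀ = t := by_contra fun hne => hv w₀ ⟨hw₀, hne⟩ hvw₀
  by_contra hne
  exact hv w ⟨hw, hne⟩ (hvw₀.trans htw)

lemma isUSPath_congr {S T : Set V} {u : V} (hST : ∀ x, G.Reachable u x → (x ∈ S ↔ x ∈ T))
    (q : Σ s : V, G.Walk u s) : IsUSPath G S u q ↔ IsUSPath G T u q := by
  classical
  have hreach : ∀ x ∈ q.2.support, G.Reachable u x := fun x hx => ⟨q.2.takeUntil x hx⟩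
  unfold IsUSPath
  rw [hST _ q.2.reachable]
  refine and_congr_right fun _ => and_congr_right fun _ => forall₂_congr fun x hx => ?_
  rw [hST x (hreach x hx)]

lemma isAcyclic_induce_reachable {S : Set V} {u : V}
    (hcycle : ∀ (v : V) (c : G.Walk v v), c.IsCycle → ∃ x ∈ c.support, x ∈ S)
    (hu : ∀ s ∈ S, ¬ G.Reachable u s) : (G.induce {v | G.Reachable u v}).IsAcyclic := by
  intro v c hc
  obtain ⟨x, hx, hxS⟩ :=
    hcycle _ _ (hc.map (f := (Embedding.induce _).toHom) (Embedding.induce (G := G) _).injective)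
  rw [Walk.support_map, List.mem_map] at hx
  obtain ⟨y, -, rfl⟩ := hx
  exact hu _ hxS y.2

lemma Walk.IsPath.eq_of_isAcyclic_induce_reachable {u s : V}
    (hac : (G.induce {v | G.Reachable u v}).IsAcyclic) {p q : G.Walk u s}
    (hp : p.IsPath) (hq : q.IsPath) : p = q := by
  classical
  let C : Set V := {v | G.Reachable u v}
  have hsupp : ∀ r : G.Walk u s, ∀ x ∈ r.support, x ∈ C :=
    fun r x hx => ⟨r.takeUntil x hx⟩
  have hlift : ∀ r : G.Walk u s, r.IsPath → (r.induce C (hsupp r)).IsPath := fun _ hr =>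
    Walk.IsPath.of_map (f := (Embedding.induce C).toHom) (by rwa [Walk.map_induce])
  have := congrArg Subtype.val
    ((hac.subsingleton_path _ _).elim ⟨_, hlift p hp⟩ ⟨_, hlift q hq⟩)
  have hmap := congrArg (Walk.map (Embedding.induce C).toHom) this
  rwa [Walk.map_induce, Walk.map_induce] at hmap

end SimpleGraph

open SimpleGraph

theorem stmt5_general {V : Type*} (G : SimpleGraph V) (S : Set V) (p : ℕ)
    (hS : IsFenCore G S p)
    (Splus : Set V)
    (hmin : Minimal (fun T : Set V => S ⊆ T ∧ ∀ v : V, ∃ w ∈ T, G.Reachable v w) Splus)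
    (u : V) (hu : u ∉ S) :
    {q : Σ s : V, G.Walk u s | IsUSPath G Splus u q}.ncard ≤ 2 := by
  by_cases hreach : ∃ s ∈ S, G.Reachable u s
  · obtain ⟨s₀, hs₀, hus₀⟩ := hreach
    have hST : ∀ x, G.Reachable u x → (x ∈ S ↔ x ∈ Splus) := fun x hux =>
      ⟨fun hx => hmin.prop.1 hx, fun hx => by_contra fun hxS =>
        hxS (eq_of_reachable_of_minimal_cover hmin hx hxS (hmin.prop.1 hs₀)
          (hux.symm.trans hus₀) ▸ hs₀)⟩
    simpa only [isUSPath_congr hST] using hS.2.1 u hu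
  · simp only [not_exists, not_and] at hreach
    have hcycle : ∀ (v : V) (c : G.Walk v v), c.IsCycle → ∃ x ∈ c.support, x ∈ S := by
      intro v c hc
      obtain ⟨e, he, heS⟩ := hS.1 v c hc
      exact ⟨_, Walk.mem_support_of_mem_edges he e.out_fst_mem, heS _ e.out_fst_mem⟩
    have hac := isAcyclic_induce_reachable hcycle hreach
    have hsub : {q : Σ s : V, G.Walk u s | IsUSPath G Splus u q}.Subsingleton := by
      rintro ⟨s₁, p₁⟩ ⟨hs₁ : s₁ ∈ Splus, hp₁ : p₁.IsPath, -⟩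
        ⟨s₂, p₂⟩ ⟨hs₂ : s₂ ∈ Splus, hp₂, -⟩
      obtain rfl := eq_of_reachable_of_minimal_cover hmin hs₁
        (fun h => hreach s₁ h p₁.reachable) hs₂ (p₁.reachable.symm.trans p₂.reachable)
      rw [hp₁.eq_of_isAcyclic_induce_reachable hac hp₂]
    exact ((Set.ncard_le_one hsub.finite).2 hsub).trans one_le_two

theorem stmt5 {V : Type*} (G : SimpleGraph V) (S : Set V) (p : ℕ)
    (hp : FeedbackEdgeNumber G p) (hS : IsFenCore G S p)
    (Splus : Set V)
    (hmin : Minimal (fun T : Set V => S ⊆ T ∧ ∀ v : V, ∃ w ∈ T, G.Reachable v w) Splus)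
    (u : V) (hu : u ∉ S) :
    {q : Σ s : V, G.Walk u s | IsUSPath G Splus u q}.ncard ≤ 2 :=
  stmt5_general G S p hS Splus hmin u hu
end

section
/- Let G be a graph, k an integer, U ⊆ V(G), χ a proper coloring of G[U], and suppose ψ is a k-b-coloring of G extending the following setup: χ = ψ restricted to S, all vertices of B are b-vertices in ψ, and no color in [b+1, p] has a b-vertex in S, where (χ, B) is an S-profile. Then every color c ∈ [k] has a b-vertex in K⁺ = K ∪ B, where K = {u ∉ S : red_χ(u) ≥ 0}. Moreover, if |K⁺| = k, then all vertices in K⁺ are b-vertices in ψ. -/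
/-- `v` is a `χ`-candidate: its `χ`-redundancy `|N[v] \ S| + |χ(N[v])| − k`
is nonnegative, where `χ` is a partial coloring defined on `S`. -/
def IsCandidate {V : Type*} (G : SimpleGraph V) (S : Set V) (χ : V → ℕ)
    (k : ℕ) (v : V) : Prop :=
  k ≤ (closedNbhd G v \ S).ncard + (χ '' (closedNbhd G v ∩ S)).ncard

/-- `v` is `χ`-tight: its `χ`-redundancy is exactly `0`. -/
def IsTight {V : Type*} (G : SimpleGraph V) (S : Set V) (χ : V → ℕ)
    (k : ℕ) (v : V) : Prop :=
  (closedNbhd G v \ S).ncard + (χ '' (closedNbhd G v ∩ S)).ncard = k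

/-- `(χ, B)` is an `S`-profile: `χ` is a proper coloring of `G[S]` with colors in
`[p]`, and `B ⊆ S` is a set of `χ`-candidates with `χ(B) = [b]` and `|B| = b`. -/
def IsSProfile {V : Type*} (G : SimpleGraph V) (S : Set V) (χ : V → ℕ)
    (B : Set V) (k p b : ℕ) : Prop :=
  (∀ u ∈ S, ∀ v ∈ S, G.Adj u v → χ u ≠ χ v) ∧
  (∀ u ∈ S, χ u ∈ Finset.Icc 1 p) ∧
  B ⊆ S ∧ (∀ u ∈ B, IsCandidate G S χ k u) ∧
  χ '' B = ↑(Finset.Icc 1 b) ∧ B.ncard = b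

/-- `K⁺ = K ∪ B` where `K` is the set of `χ`-candidates outside `S`. -/
def Kplus {V : Type*} (G : SimpleGraph V) (S : Set V) (χ : V → ℕ)
    (B : Set V) (k : ℕ) : Set V :=
  {u | u ∉ S ∧ IsCandidate G S χ k u} ∪ B

/-- The `k`-b-coloring `ψ` is described by the `S`-profile `(χ, B)`:
`ψ` restricted to `S` is `χ`, all vertices of `B` are b-vertices, and no color in
`[b+1, p]` has a b-vertex in `S`. -/
def DescribedBy {V : Type*} (G : SimpleGraph V) (S : Set V) (χ : V → ℕ)
    (B : Set V) (k p b : ℕ) (ψ : V → ℕ) : Prop :=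
  IsBColoring G k ψ ∧ (∀ u ∈ S, ψ u = χ u) ∧
  (∀ u ∈ B, IsBVertex G k ψ u) ∧
  ∀ c ∈ Finset.Icc (b + 1) p, ¬∃ u ∈ S, ψ u = c ∧ IsBVertex G k ψ u

/- A b-vertex of a color `c ≤ b` is supplied by `B`. A b-vertex `u` of a color `c > b` cannot lie
in `S`, because `χ` only uses colors in `[p]` and no color of `[b+1, p]` has a b-vertex in `S`; and
since `N[u]` sees all `k` colors, of which those on `N[u] ∩ S` are given by `χ`, `u` is a
`χ`-candidate, so `u ∈ K`. Hence the b-vertices in `K⁺` cover all `k` colors, and when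
`|K⁺| = k` they must exhaust `K⁺`. -/

theorem Set.forall_mem_of_image_covers {α β : Type*} {K : Set α} (hK : K.Finite) (f : α → β)
    (P : α → Prop) (T : Finset β) (hT : ∀ c ∈ T, ∃ u ∈ K, f u = c ∧ P u)
    (hcard : K.ncard ≤ T.card) : ∀ u ∈ K, P u := by
  set W := {u ∈ K | P u}
  have hWK : W ⊆ K := fun _ hu => hu.1
  have hTW : (T : Set β) ⊆ f '' W := fun c hc => by
    obtain ⟨u, huK, rfl, hu⟩ := hT c hc
    exact ⟨u, ⟨huK, hu⟩, rfl⟩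
  have hKW : K.ncard ≤ W.ncard := calc
    K.ncard ≤ T.card := hcard
    _ = (T : Set β).ncard := (Set.ncard_coe_finset T).symm
    _ ≤ (f '' W).ncard := Set.ncard_le_ncard hTW ((hK.subset hWK).image f)
    _ ≤ W.ncard := Set.ncard_image_le (hK.subset hWK)
  have hWeq : W = K := Set.eq_of_subset_of_ncard_le hWK hKW hK
  exact fun u hu => (hWeq ▸ hu : u ∈ W).2

section

variable {V : Type*} [Finite V] {G : SimpleGraph V} {S : Set V} {χ ψ : V → ℕ} {k : ℕ} {u : V}

theorem IsBVertex.le_ncard_image (hu : IsBVertex G k ψ u) :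
    k ≤ (ψ '' closedNbhd G u).ncard := by
  have hsub : (Finset.Icc 1 k : Set ℕ) ⊆ ψ '' closedNbhd G u := fun c hc => by
    obtain ⟨w, hw, hwc⟩ := hu c hc
    exact ⟨w, hw, hwc⟩
  calc k = (Finset.Icc 1 k : Set ℕ).ncard := by simp
    _ ≤ (ψ '' closedNbhd G u).ncard := Set.ncard_le_ncard hsub (Set.toFinite _)

theorem IsBVertex.isCandidate (hu : IsBVertex G k ψ u) (hψ : ∀ v ∈ S, ψ v = χ v) :
    IsCandidate G S χ k u := by
  set N := closedNbhd G u
  have hinter : ψ '' (N ∩ S) = χ '' (N ∩ S) := Set.image_congr fun v hv => hψ v hv.2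
  calc k ≤ (ψ '' N).ncard := hu.le_ncard_image
    _ = (ψ '' (N \ S) ∪ ψ '' (N ∩ S)).ncard := by rw [← Set.image_union, Set.sdiff_union_inter]
    _ ≤ (ψ '' (N \ S)).ncard + (ψ '' (N ∩ S)).ncard := Set.ncard_union_le _ _
    _ ≤ (N \ S).ncard + (χ '' (N ∩ S)).ncard := by
      rw [hinter]
      exact Nat.add_le_add_right (Set.ncard_image_le (Set.toFinite _)) _

end

theorem DescribedBy.not_mem_of_isBVertex {V : Type*} {G : SimpleGraph V} {S : Set V}
    {χ : V → ℕ} {B : Set V} {k p b : ℕ} {ψ : V → ℕ} {u : V}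
    (hχ : ∀ v ∈ S, χ v ∈ Finset.Icc 1 p) (hψ : DescribedBy G S χ B k p b ψ)
    (hbu : b < ψ u) (hu : IsBVertex G k ψ u) : u ∉ S := by
  intro huS
  have hup : ψ u ≤ p := by
    have := hχ u huS
    rw [← hψ.2.1 u huS, Finset.mem_Icc] at this
    exact this.2
  exact hψ.2.2.2 (ψ u) (Finset.mem_Icc.mpr ⟨hbu, hup⟩) ⟨u, huS, rfl, hu⟩

theorem exists_isBVertex_mem_Kplus {V : Type*} [Finite V] {G : SimpleGraph V} {S : Set V}
    {χ : V → ℕ} {B : Set V} {k p b : ℕ} {ψ : V → ℕ}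
    (hprof : IsSProfile G S χ B k p b) (hψ : DescribedBy G S χ B k p b ψ) :
    ∀ c ∈ Finset.Icc 1 k, ∃ u ∈ Kplus G S χ B k, ψ u = c ∧ IsBVertex G k ψ u := by
  obtain ⟨_, hχ, hBS, _, hχB, _⟩ := hprof
  intro c hc
  rcases le_or_gt c b with hcb | hbc
  · have hcB : c ∈ χ '' B := by
      rw [hχB, Finset.coe_Icc]
      exact ⟨(Finset.mem_Icc.mp hc).1, hcb⟩
    obtain ⟨u, huB, rfl⟩ := hcB
    exact ⟨u, Or.inr huB, hψ.2.1 u (hBS huB), hψ.2.2.1 u huB⟩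
  · obtain ⟨u, rfl, hu⟩ := hψ.1.2.2 c hc
    have huS := hψ.not_mem_of_isBVertex hχ hbc hu
    exact ⟨u, Or.inl ⟨huS, hu.isCandidate hψ.2.1⟩, rfl, hu⟩

theorem stmt11 {V : Type*} [Fintype V] (G : SimpleGraph V) (S : Set V)
    (χ : V → ℕ) (B : Set V) (k p b : ℕ)
    (hprof : IsSProfile G S χ B k p b)
    (ψ : V → ℕ) (hψ : DescribedBy G S χ B k p b ψ) :
    (∀ c ∈ Finset.Icc 1 k, ∃ u ∈ Kplus G S χ B k, ψ u = c ∧ IsBVertex G k ψ u) ∧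
    ((Kplus G S χ B k).ncard = k → ∀ u ∈ Kplus G S χ B k, IsBVertex G k ψ u) := by
  have hcover := exists_isBVertex_mem_Kplus hprof hψ
  refine ⟨hcover, fun hcard => ?_⟩
  exact Set.forall_mem_of_image_covers (Set.toFinite _) ψ _ _ hcover (by simp [hcard])
end

section
/- Let G be a graph, (χ, B) an S-profile, K⁺ = {u ∉ S : red_χ(u) ≥ 0} ∪ B, and ψ a k-b-coloring of G described by (χ, B). Suppose u ∈ V(G), v ∉ S, and w ∈ K⁺ is χ-tight, adjacent to both u and v with u ≠ v, and w is a b-vertex in ψ. Then ψ(u) ≠ ψ(v). -/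
/-!
Since `w` is a b-vertex, `ψ` takes all `k` colours on `N[w]`. Every vertex of `N[w] \ S` adds at
most one colour and on `N[w] ∩ S` the colours are those of `χ`, so tightness of `w` leaves no room
to spare: if `ψ u = ψ v`, then `v ∉ S` adds no new colour and `N[w]` sees at most `k - 1` colours.
-/

theorem Set.image_eq_image_diff_singleton_of_apply_eq {α β : Type*} {f : α → β} {s : Set α}
    {u v : α} (hu : u ∈ s) (huv : u ≠ v) (h : f u = f v) : f '' s = f '' (s \ {v}) := by
  refine (Set.image_mono Set.sdiff_subset).antisymm' ?_
  rintro _ ⟨x, hx, rfl⟩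
  by_cases hxv : x = v
  · exact ⟨u, ⟨hu, huv⟩, hxv ▸ h⟩
  · exact ⟨x, ⟨hx, hxv⟩, rfl⟩

theorem Set.ncard_image_le_ncard_diff_add_ncard_image_inter {α β : Type*} {f g : α → β}
    {s t : Set α} (hs : s.Finite) (hfg : Set.EqOn f g (s ∩ t)) :
    (f '' s).ncard ≤ (s \ t).ncard + (g '' (s ∩ t)).ncard :=
  calc (f '' s).ncard = (f '' (s \ t) ∪ f '' (s ∩ t)).ncard := by
        rw [← Set.image_union, Set.sdiff_union_inter]
    _ ≤ (f '' (s \ t)).ncard + (f '' (s ∩ t)).ncard := Set.ncard_union_le _ _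
    _ ≤ (s \ t).ncard + (g '' (s ∩ t)).ncard := by
        rw [Set.image_congr hfg]
        exact Nat.add_le_add_right (Set.ncard_image_le (hs.subset Set.sdiff_subset)) _

theorem IsBVertex.le_ncard_image_closedNbhd {V : Type*} {G : SimpleGraph V} {k : ℕ}
    {ψ : V → ℕ} {w : V} (hb : IsBVertex G k ψ w) (hfin : (closedNbhd G w).Finite) :
    k ≤ (ψ '' closedNbhd G w).ncard := by
  have hsub : (↑(Finset.Icc 1 k) : Set ℕ) ⊆ ψ '' closedNbhd G w := fun c hc => hb c hc
  simpa using Set.ncard_le_ncard hsub (hfin.image ψ)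

theorem stmt12_general {V : Type*} [Fintype V] (G : SimpleGraph V) (S : Set V)
    (χ : V → ℕ) (B : Set V) (k p b : ℕ)
    (ψ : V → ℕ) (hψ : DescribedBy G S χ B k p b ψ)
    (u v w : V) (hv : v ∉ S)
    (htight : IsTight G S χ k w)
    (hwu : G.Adj w u) (hwv : G.Adj w v) (huv : u ≠ v)
    (hb : IsBVertex G k ψ w) :
    ψ u ≠ ψ v := by
  intro h
  let N := closedNbhd G w
  have huN : u ∈ N := Set.mem_insert_of_mem _ hwu
  have hvN : v ∈ N \ S := ⟨Set.mem_insert_of_mem _ hwv, hv⟩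
  have htight' : (N \ S).ncard + (χ '' (N ∩ S)).ncard = k := htight
  have hψχ : Set.EqOn ψ χ ((N \ {v}) ∩ S) := fun x hx => hψ.2.1 x hx.2
  have hNS : (N \ {v}) ∩ S = N ∩ S := by
    rw [← Set.inter_sdiff_right_comm, Set.sdiff_singleton_eq_self fun hv' => hv hv'.2]
  have hpos : 0 < (N \ S).ncard := (Set.ncard_pos (Set.toFinite _)).2 ⟨v, hvN⟩
  have hcount : k < k := calc
    k ≤ (ψ '' N).ncard := hb.le_ncard_image_closedNbhd (Set.toFinite _)
    _ = (ψ '' (N \ {v})).ncard := by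
      rw [Set.image_eq_image_diff_singleton_of_apply_eq huN huv h]
    _ ≤ ((N \ {v}) \ S).ncard + (χ '' ((N \ {v}) ∩ S)).ncard :=
      Set.ncard_image_le_ncard_diff_add_ncard_image_inter (Set.toFinite _) hψχ
    _ = (N \ S).ncard - 1 + (χ '' (N ∩ S)).ncard := by
      rw [Set.sdiff_sdiff_comm, Set.ncard_sdiff_singleton_of_mem hvN, hNS]
    _ < k := by omega
  exact lt_irrefl k hcount

theorem stmt12 {V : Type*} [Fintype V] (G : SimpleGraph V) (S : Set V)
    (χ : V → ℕ) (B : Set V) (k p b : ℕ)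
    (hprof : IsSProfile G S χ B k p b)
    (ψ : V → ℕ) (hψ : DescribedBy G S χ B k p b ψ)
    (u v w : V) (hv : v ∉ S) (hw : w ∈ Kplus G S χ B k)
    (htight : IsTight G S χ k w)
    (hwu : G.Adj w u) (hwv : G.Adj w v) (huv : u ≠ v)
    (hb : IsBVertex G k ψ w) :
    ψ u ≠ ψ v :=
  stmt12_general G S χ B k p b ψ hψ u v w hv htight hwu hwv huv hb
end

section
/- Let G be a graph with co-cluster-modulator S, p = min(|S|, k), 𝒰 the set of maximal independent sets of G − S, and ψ a k-b-coloring of G with ψ(S) ⊆ [p]. Then for each color c ∈ [p+1, k], there is a unique set U_c ∈ 𝒰 with ψ⁻¹(c) ⊆ U_c, and for distinct colors c, d ∈ [p+1, k] we have U_c ≠ U_d. -/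
/-- `S` is a co-cluster-modulator of `G`: `G − S` is a complete multipartite
(co-cluster) graph, i.e., non-adjacency is transitive on the vertices outside `S`. -/
def IsCoClusterModulator {V : Type*} (G : SimpleGraph V) (S : Set V) : Prop :=
  ∀ u ∉ S, ∀ v ∉ S, ∀ w ∉ S, ¬G.Adj u v → ¬G.Adj v w → ¬G.Adj u w

/-- `U` is a maximal independent set of `G − S`. -/
def IsMaxIndepOn {V : Type*} (G : SimpleGraph V) (S U : Set V) : Prop :=
  U ⊆ Sᶜ ∧ (∀ u ∈ U, ∀ v ∈ U, ¬G.Adj u v) ∧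
  ∀ W : Set V, U ⊆ W → W ⊆ Sᶜ → (∀ u ∈ W, ∀ v ∈ W, ¬G.Adj u v) → W = U

/-!
A color `c > p` does not occur on `S`, so its b-vertex `u` lies outside `S`. Since non-adjacency
is transitive on `G − S`, the non-neighbours of `u` outside `S` form the unique part containing
`u`, and properness puts the whole class of `c` into that part. If the classes of two such
colors `c ≠ d` lay in one part, the b-vertex of `c` would have a neighbour of color `d` inside
an independent set.
-/

/-- For `u ∉ S`, the part of the complete multipartite graph `G − S` containing `u`. -/
def nonNeighborsOutside {V : Type*} (G : SimpleGraph V) (S : Set V) (u : V) : Set V :=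
  {v | v ∉ S ∧ ¬G.Adj u v}

section

variable {V : Type*} {G : SimpleGraph V} {S U : Set V} {u : V}

theorem IsMaxIndepOn.subset_nonNeighborsOutside (hU : IsMaxIndepOn G S U) (hu : u ∈ U) :
    U ⊆ nonNeighborsOutside G S u :=
  fun v hv => ⟨hU.1 hv, hU.2.1 u hu v hv⟩

theorem IsCoClusterModulator.isMaxIndepOn_nonNeighborsOutside (hS : IsCoClusterModulator G S)
    (hu : u ∉ S) : IsMaxIndepOn G S (nonNeighborsOutside G S u) := by
  have hind : ∀ a ∈ nonNeighborsOutside G S u, ∀ b ∈ nonNeighborsOutside G S u, ¬G.Adj a b :=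
    fun a ha b hb => hS a ha.1 u hu b hb.1 (fun h => ha.2 h.symm) hb.2
  refine ⟨fun v hv => hv.1, hind, fun W hUW hWS hWind => ?_⟩
  have huW : u ∈ W := hUW ⟨hu, G.loopless.irrefl u⟩
  exact Set.Subset.antisymm (fun w hw => ⟨hWS hw, hWind u huW w hw⟩) hUW

theorem IsCoClusterModulator.eq_nonNeighborsOutside (hS : IsCoClusterModulator G S)
    (hU : IsMaxIndepOn G S U) (hu : u ∈ U) : U = nonNeighborsOutside G S u :=
  (hU.2.2 _ (hU.subset_nonNeighborsOutside hu) (fun _ hv => hv.1)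
    (hS.isMaxIndepOn_nonNeighborsOutside (hU.1 hu)).2.1).symm

theorem setOf_color_subset_nonNeighborsOutside {ψ : V → ℕ} {c : ℕ}
    (hproper : ∀ u v, G.Adj u v → ψ u ≠ ψ v) (hcS : ∀ v ∈ S, ψ v ≠ c) (hu : ψ u = c) :
    {v | ψ v = c} ⊆ nonNeighborsOutside G S u :=
  fun v hv => ⟨fun h => hcS v h hv, fun h => hproper u v h (hu.trans hv.symm)⟩

theorem IsBVertex.exists_adj_of_ne {k : ℕ} {ψ : V → ℕ} {d : ℕ} (hu : IsBVertex G k ψ u)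
    (hd : d ∈ Finset.Icc 1 k) (hne : ψ u ≠ d) : ∃ w, G.Adj u w ∧ ψ w = d := by
  obtain ⟨w, hw, hwd⟩ := hu d hd
  rcases Set.mem_insert_iff.mp hw with rfl | hadj
  · exact absurd hwd hne
  · exact ⟨w, hadj, hwd⟩

end

theorem stmt15_general {V : Type*} (G : SimpleGraph V) (S : Set V) (k p : ℕ)
    (hS : IsCoClusterModulator G S)
    (ψ : V → ℕ) (hψ : IsBColoring G k ψ)
    (hψS : ∀ v ∈ S, ψ v ∈ Finset.Icc 1 p) :
    (∀ c ∈ Finset.Icc (p + 1) k,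
      ∃! U : Set V, IsMaxIndepOn G S U ∧ {v | ψ v = c} ⊆ U) ∧
    ∀ c ∈ Finset.Icc (p + 1) k, ∀ d ∈ Finset.Icc (p + 1) k, c ≠ d →
      ∀ U U' : Set V,
        (IsMaxIndepOn G S U ∧ {v | ψ v = c} ⊆ U) →
        (IsMaxIndepOn G S U' ∧ {v | ψ v = d} ⊆ U') → U ≠ U' := by
  obtain ⟨-, hproper, hb⟩ := hψ
  have hcolor : Finset.Icc (p + 1) k ⊆ Finset.Icc 1 k :=
    Finset.Icc_subset_Icc_left (Nat.le_add_left 1 p)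
  have hfresh : ∀ c ∈ Finset.Icc (p + 1) k, ∀ v ∈ S, ψ v ≠ c := fun c hc v hv => by
    have := Finset.mem_Icc.mp (hψS v hv)
    have := Finset.mem_Icc.mp hc
    omega
  refine ⟨fun c hc => ?_, fun c hc d hd hcd U U' ⟨hU, hcU⟩ ⟨_, hdU'⟩ hUU' => ?_⟩
  · obtain ⟨u, rfl, -⟩ := hb c (hcolor hc)
    have huS : u ∉ S := fun h => hfresh _ hc u h rfl
    exact ⟨_, ⟨hS.isMaxIndepOn_nonNeighborsOutside huS,
      setOf_color_subset_nonNeighborsOutside hproper (hfresh _ hc) rfl⟩,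
      fun U ⟨hU, hcU⟩ => hS.eq_nonNeighborsOutside hU (hcU rfl)⟩
  · obtain ⟨u, rfl, hu⟩ := hb c (hcolor hc)
    obtain ⟨w, huw, rfl⟩ := hu.exists_adj_of_ne (hcolor hd) hcd
    exact hU.2.1 u (hcU rfl) w (hUU' ▸ hdU' rfl) huw

theorem stmt15 {V : Type*} [Fintype V] (G : SimpleGraph V) (S : Set V) (k p : ℕ)
    (hS : IsCoClusterModulator G S)
    (hp : p = min S.ncard k)
    (ψ : V → ℕ) (hψ : IsBColoring G k ψ)
    (hψS : ∀ v ∈ S, ψ v ∈ Finset.Icc 1 p) :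
    (∀ c ∈ Finset.Icc (p + 1) k,
      ∃! U : Set V, IsMaxIndepOn G S U ∧ {v | ψ v = c} ⊆ U) ∧
    ∀ c ∈ Finset.Icc (p + 1) k, ∀ d ∈ Finset.Icc (p + 1) k, c ≠ d →
      ∀ U U' : Set V,
        (IsMaxIndepOn G S U ∧ {v | ψ v = c} ⊆ U) →
        (IsMaxIndepOn G S U' ∧ {v | ψ v = d} ⊆ U') → U ≠ U' :=
  stmt15_general G S k p hS ψ hψ hψS
end
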